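/- Let n ≥ 1, let l_1, …, l_{n−1} and m_1, …, m_n be real numbers, and let (C(z), B(z), A(z))ᵗ = S(z)(1,0,0)ᵗ, where S(z) = G_n(z) L_{n−1} G_{n−1}(z) ⋯ L_1 G_1(z) with L_k = [[1, l_k, l_k²/2],[0,1,l_k],[0,0,1]] and G_k(z) = [[1,0,0],[0,1,0],[−2 m_k z,0,1]]. Then the polynomial identity A(−z) C(z) − B(−z) B(z) + C(−z) A(z) = 0 holds. Consequently the Weyl functions W(z) = B(z)/A(z) and Z(z) = C(z)/A(z) satisfy Z(z) + Z(−z) = W(z) W(−z). -/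
import Mathlib


open Polynomial Matrix

/-- The transfer matrix `L_k` of the discrete cubic string (with gap `l`). -/
noncomputable def Lmat (l : ℝ) : Matrix (Fin 3) (Fin 3) (Polynomial ℝ) :=
  !![1, Polynomial.C l, Polynomial.C (l ^ 2 / 2);
     0, 1, Polynomial.C l;
     0, 0, 1]

/-- The transfer matrix `G_k(z)` of the discrete cubic string (with mass `m`). -/
noncomputable def Gmat (m : ℝ) : Matrix (Fin 3) (Fin 3) (Polynomial ℝ) :=
  !![1, 0, 0;
     0, 1, 0;
     Polynomial.C (-2 * m) * Polynomial.X, 0, 1]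

/-- The transition matrix `S(z) = G_n(z) L_{n−1} G_{n−1}(z) ⋯ L_1 G_1(z)` of the
discrete cubic string with masses `m 1, …, m n` and gaps `l 1, …, l (n−1)`. -/
noncomputable def transMat (m l : ℕ → ℝ) : ℕ → Matrix (Fin 3) (Fin 3) (Polynomial ℝ)
  | 0 => 1
  | 1 => Gmat (m 1)
  | (k + 2) => Gmat (m (k + 2)) * Lmat (l (k + 1)) * transMat m l (k + 1)

/-- The substitution `z ↦ −z` as a ring homomorphism of `ℝ[X]`. -/
noncomputable def sigmaP : Polynomial ℝ →+* Polynomial ℝ :=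
  (Polynomial.aeval (-Polynomial.X : Polynomial ℝ)).toRingHom

lemma sigmaP_apply (p : Polynomial ℝ) : sigmaP p = p.comp (-Polynomial.X) := by
  simp [sigmaP, Polynomial.aeval_def, Polynomial.comp, Polynomial.algebraMap_eq]

/-- The bilinear form matrix. -/
noncomputable def Jmat : Matrix (Fin 3) (Fin 3) (Polynomial ℝ) :=
  !![0, 0, 1; 0, -1, 0; 1, 0, 0]

lemma lemG (a : ℝ) : ((Gmat a).map sigmaP)ᵀ * Jmat * Gmat a = Jmat := by
  refine Matrix.ext fun i j => ?_
  fin_cases i <;> fin_cases j <;>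
    simp [Matrix.mul_apply, Fin.sum_univ_succ, Gmat, Jmat, sigmaP_apply,
      Matrix.vecHead, Matrix.vecTail] <;> ring

lemma lemL (a : ℝ) : ((Lmat a).map sigmaP)ᵀ * Jmat * Lmat a = Jmat := by
  have h2 : (Polynomial.C (a ^ 2 / 2) : Polynomial ℝ)
      + (-(Polynomial.C a * Polynomial.C a) + Polynomial.C (a ^ 2 / 2)) = 0 := by
    rw [← Polynomial.C_mul, ← Polynomial.C_neg, ← Polynomial.C_add, ← Polynomial.C_add,
      Polynomial.C_eq_zero]
    ring
  refine Matrix.ext fun i j => ?_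
  fin_cases i <;> fin_cases j <;>
    simp [Matrix.mul_apply, Fin.sum_univ_succ, Lmat, Jmat, sigmaP_apply,
      Matrix.vecHead, Matrix.vecTail, h2]

lemma auxAssoc (A J M P : Matrix (Fin 3) (Fin 3) (Polynomial ℝ))
    (h : A * J * M = J) : A * (J * (M * P)) = J * P := by
  rw [← Matrix.mul_assoc, ← Matrix.mul_assoc, h]

lemma keyMat (m l : ℕ → ℝ) (n : ℕ) :
    ((transMat m l n).map sigmaP)ᵀ * Jmat * transMat m l n = Jmat := by
  induction n using Nat.strong_induction_on with
  | _ n ih =>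
    match n with
    | 0 =>
      simp [transMat, Matrix.map_one sigmaP sigmaP.map_zero sigmaP.map_one]
    | 1 =>
      simpa [transMat] using lemG (m 1)
    | (k + 2) =>
      have ihk := ih (k + 1) (by omega)
      show ((Gmat (m (k+2)) * Lmat (l (k+1)) * transMat m l (k+1)).map sigmaP)ᵀ
          * Jmat * (Gmat (m (k+2)) * Lmat (l (k+1)) * transMat m l (k+1)) = Jmat
      simp only [Matrix.map_mul, Matrix.transpose_mul, Matrix.mul_assoc]
      rw [auxAssoc _ _ _ _ (lemG (m (k+2))), auxAssoc _ _ _ _ (lemL (l (k+1))),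
        ← Matrix.mul_assoc, ihk]

/-- **The identity `A(−z)C(z) − B(−z)B(z) + C(−z)A(z) = 0` and the Weyl function
relation `Z(z) + Z(−z) = W(z)W(−z)`** for the discrete cubic string, where
`(C, B, A)ᵗ = S(z)(1,0,0)ᵗ`, `W = B/A` and `Z = C/A`. -/
theorem stmt6 (n : ℕ) (hn : 1 ≤ n) (m l : ℕ → ℝ)
    (Cp Bp Ap : Polynomial ℝ)
    (hC : Cp = (transMat m l n).mulVec ![1, 0, 0] 0)
    (hB : Bp = (transMat m l n).mulVec ![1, 0, 0] 1)
    (hA : Ap = (transMat m l n).mulVec ![1, 0, 0] 2) :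
    (Ap.comp (-Polynomial.X) * Cp - Bp.comp (-Polynomial.X) * Bp
        + Cp.comp (-Polynomial.X) * Ap = 0) ∧
    (∀ z : ℝ, Ap.eval z ≠ 0 → Ap.eval (-z) ≠ 0 →
      Cp.eval z / Ap.eval z + Cp.eval (-z) / Ap.eval (-z)
        = (Bp.eval z / Ap.eval z) * (Bp.eval (-z) / Ap.eval (-z))) := by
  set S := transMat m l n with hS
  have hC' : Cp = S 0 0 := by
    simp [hC, Matrix.mulVec, dotProduct, Fin.sum_univ_succ]
  have hB' : Bp = S 1 0 := by
    simp [hB, Matrix.mulVec, dotProduct, Fin.sum_univ_succ]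
  have hA' : Ap = S 2 0 := by
    simp [hA, Matrix.mulVec, dotProduct, Fin.sum_univ_succ]
  have hkey := keyMat m l n
  have h00 := congrFun (congrFun hkey 0) 0
  simp [Matrix.mul_apply, Fin.sum_univ_succ, Jmat, Matrix.transpose_apply,
    Matrix.map_apply, sigmaP_apply, ← hS] at h00
  have main : Ap.comp (-Polynomial.X) * Cp - Bp.comp (-Polynomial.X) * Bp
      + Cp.comp (-Polynomial.X) * Ap = 0 := by
    rw [hC', hB', hA']
    linear_combination h00
  refine ⟨main, fun z hz hz' => ?_⟩
  have hev := congrArg (Polynomial.eval z) main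
  simp only [Polynomial.eval_add, Polynomial.eval_sub, Polynomial.eval_mul,
    Polynomial.eval_comp, Polynomial.eval_neg, Polynomial.eval_X,
    Polynomial.eval_zero] at hev
  rw [div_add_div _ _ hz hz', div_mul_div_comm,
    div_eq_div_iff (mul_ne_zero hz hz') (mul_ne_zero hz hz')]
  linear_combination (Ap.eval z * Ap.eval (-z)) * hev
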